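/- The equilibrium outputs in Pattern 6 (all firms choose prices) coincide with those in Pattern 4 (firms A and B choose prices, firm C chooses its quantity): both yield x_A = x_B = (2b²c_C + b·c_C + 3b²c_A - 2b·c_A - 4c_A - 5ab² + ab + 4a)/((1-b)(b+2)(5b+4)) and x_C = (b²c_C - 3b·c_C - 4c_C + 4b²c_A + 2b·c_A - 5ab² + ab + 4a)/((1-b)(b+2)(5b+4)). -/
import Mathlib

/-- Pattern 4: price of C and outputs of A and B expressed in the variables (p_A, p_B, x_C). -/
noncomputable def p4pC (a b pA pB xC : ℝ) : ℝ :=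
  ((1 - b) * a + 2 * b ^ 2 * xC - b * xC - xC + b * pA + b * pB) / (1 + b)

noncomputable def p4xB (a b pA pB xC : ℝ) : ℝ :=
  ((1 - b) * a + b ^ 2 * xC - b * xC + b * pA - pB) / ((1 - b) * (1 + b))

noncomputable def p4xA (a b pA pB xC : ℝ) : ℝ :=
  ((1 - b) * a + b ^ 2 * xC - b * xC - pA + b * pB) / ((1 - b) * (1 + b))

/-- Pattern 4 relative profits as functions of (p_A, p_B, x_C), with c_A = c_B. -/
noncomputable def p4psiA (a b cA cC pA pB xC : ℝ) : ℝ :=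
  (pA - cA) * p4xA a b pA pB xC -
    ((pB - cA) * p4xB a b pA pB xC + (p4pC a b pA pB xC - cC) * xC) / 2

noncomputable def p4psiB (a b cA cC pA pB xC : ℝ) : ℝ :=
  (pB - cA) * p4xB a b pA pB xC -
    ((pA - cA) * p4xA a b pA pB xC + (p4pC a b pA pB xC - cC) * xC) / 2

noncomputable def p4psiC (a b cA cC pA pB xC : ℝ) : ℝ :=
  (p4pC a b pA pB xC - cC) * xC -
    ((pA - cA) * p4xA a b pA pB xC + (pB - cA) * p4xB a b pA pB xC) / 2

set_option maxHeartbeats 4000000 in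
/-- The Pattern 4 game (A, B choose prices, C chooses its quantity) has a Nash
equilibrium whose output triple equals the Pattern 6 (Bertrand) equilibrium outputs. -/
theorem pattern4_equals_pattern6 (a b cA cC : ℝ) (hb0 : 0 < b) (hb1 : b < 1) :
    ∃ pA pB xC : ℝ,
      (∀ p : ℝ, p4psiA a b cA cC p pB xC ≤ p4psiA a b cA cC pA pB xC) ∧
      (∀ p : ℝ, p4psiB a b cA cC pA p xC ≤ p4psiB a b cA cC pA pB xC) ∧
      (∀ x : ℝ, p4psiC a b cA cC pA pB x ≤ p4psiC a b cA cC pA pB xC) ∧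
      p4xA a b pA pB xC =
        (2 * b ^ 2 * cC + b * cC + 3 * b ^ 2 * cA - 2 * b * cA - 4 * cA - 5 * a * b ^ 2
          + a * b + 4 * a) / ((1 - b) * (b + 2) * (5 * b + 4)) ∧
      p4xB a b pA pB xC =
        (2 * b ^ 2 * cC + b * cC + 3 * b ^ 2 * cA - 2 * b * cA - 4 * cA - 5 * a * b ^ 2
          + a * b + 4 * a) / ((1 - b) * (b + 2) * (5 * b + 4)) ∧
      xC = (b ^ 2 * cC - 3 * b * cC - 4 * cC + 4 * b ^ 2 * cA + 2 * b * cA - 5 * a * b ^ 2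
          + a * b + 4 * a) / ((1 - b) * (b + 2) * (5 * b + 4)) := by
  have h1 : (0:ℝ) < 1 - b := by linarith
  have h2 : (0:ℝ) < 1 + b := by linarith
  have h3 : (0:ℝ) < b + 2 := by linarith
  have h4 : (0:ℝ) < 5 * b + 4 := by linarith
  have h1' := h1.ne'
  have h2' := h2.ne'
  have h3' := h3.ne'
  have h4' := h4.ne'
  set XA : ℝ := (2 * b ^ 2 * cC + b * cC + 3 * b ^ 2 * cA - 2 * b * cA - 4 * cA
      - 5 * a * b ^ 2 + a * b + 4 * a) / ((1 - b) * (b + 2) * (5 * b + 4)) with hXA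
  set XC : ℝ := (b ^ 2 * cC - 3 * b * cC - 4 * cC + 4 * b ^ 2 * cA + 2 * b * cA
      - 5 * a * b ^ 2 + a * b + 4 * a) / ((1 - b) * (b + 2) * (5 * b + 4)) with hXC
  set P : ℝ := a - (1 + b) * XA - b * XC with hP
  refine ⟨P, P, XC, ?_, ?_, ?_, ?_, ?_, rfl⟩
  · intro p
    have key : p4psiA a b cA cC P P XC - p4psiA a b cA cC p P XC
        = (p - P) ^ 2 / ((1 - b) * (1 + b)) := by
      simp only [p4psiA, p4xA, p4xB, p4pC, hP, hXA, hXC]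
      field_simp
      ring
    have hk : (0:ℝ) ≤ (p - P) ^ 2 / ((1 - b) * (1 + b)) := by positivity
    linarith
  · intro p
    have key : p4psiB a b cA cC P P XC - p4psiB a b cA cC P p XC
        = (p - P) ^ 2 / ((1 - b) * (1 + b)) := by
      simp only [p4psiB, p4xA, p4xB, p4pC, hP, hXA, hXC]
      field_simp
      ring
    have hk : (0:ℝ) ≤ (p - P) ^ 2 / ((1 - b) * (1 + b)) := by positivity
    linarith
  · intro x
    have key : p4psiC a b cA cC P P XC - p4psiC a b cA cC P P x
        = ((2 * b + 1) * (1 - b)) * (x - XC) ^ 2 / (1 + b) := by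
      simp only [p4psiC, p4xA, p4xB, p4pC, hP, hXA, hXC]
      field_simp
      ring
    have hk : (0:ℝ) ≤ ((2 * b + 1) * (1 - b)) * (x - XC) ^ 2 / (1 + b) := by positivity
    linarith
  · simp only [p4xA, hP, hXA, hXC]
    field_simp
    ring
  · simp only [p4xB, hP, hXA, hXC]
    field_simp
    ring
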